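/- arXiv:2503.10543 — 2 statements merged into one kernel-verified Lean document; each statement's English description precedes it below -/
import Mathlib

section
/- Let E be a real Banach space, let C be a nonempty closed convex subset of E, let T > 0, and let A : [0,T] × C → E be a family of operators satisfying: (i) there exists a constant L ≥ 0 such that ‖A(t,c₁) − A(t,c₂)‖ ≤ L‖c₁ − c₂‖ for every c₁, c₂ ∈ C and t ∈ [0,T]; (ii) for every c ∈ C the map t ↦ A(t,c) is continuous on [0,T]; (iii) for every R > 0 there exists θ > 0 such that for every c ∈ C with ‖c‖ ≤ R and every t ∈ [0,T] one has c + θ·A(t,c) ∈ C. Then for every c̄ ∈ C there exists a unique curve c : [0,T] → E of class C¹ such that c(t) ∈ C for all t ∈ [0,T], c(0) = c̄, and c'(t) = A(t, c(t)) for all t ∈ [0,T]. -/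
set_option maxHeartbeats 1000000
open Set Real

lemma int_exp_mul (c : ℝ) (hc : c ≠ 0) (t : ℝ) :
    ∫ s in (0:ℝ)..t, Real.exp (c*s) = (Real.exp (c*t) - 1)/c := by
  have h : ∀ x ∈ uIcc (0:ℝ) t, HasDerivAt (fun s => Real.exp (c*s) / c) (Real.exp (c*x)) x := by
    intro x _
    have := ((hasDerivAt_id x).const_mul c).exp.div_const c
    simpa [mul_comm, mul_div_assoc, mul_div_cancel_left₀ _ hc] using this
  have := intervalIntegral.integral_eq_sub_of_hasDerivAt h
    ((Real.continuous_exp.comp (continuous_const.mul continuous_id)).intervalIntegrable 0 t)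
  simp at this
  rw [this]; ring

lemma contAcomp {E : Type*} [NormedAddCommGroup E] [NormedSpace ℝ E]
    (C : Set E) (A : ℝ → E → E) (L : ℝ)
    (hlip : ∀ t : ℝ, ∀ c₁ ∈ C, ∀ c₂ ∈ C, ‖A t c₁ - A t c₂‖ ≤ L * ‖c₁ - c₂‖)
    (hcont : ∀ c ∈ C, Continuous fun t => A t c)
    (c : ℝ → E) (hc : Continuous c) (hmem : ∀ s, c s ∈ C) :
    Continuous fun s => A s (c s) := by
  rw [continuous_iff_continuousAt]
  intro s₀
  have h2 : Continuous fun s => A s (c s₀) := hcont _ (hmem s₀)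
  have h1 : Filter.Tendsto (fun s => A s (c s) - A s (c s₀)) (nhds s₀) (nhds 0) := by
    apply squeeze_zero_norm (a := fun s => L * ‖c s - c s₀‖)
    · intro s; exact hlip s _ (hmem s) _ (hmem s₀)
    · have : Filter.Tendsto (fun s => L * ‖c s - c s₀‖) (nhds s₀) (nhds (L * ‖c s₀ - c s₀‖)) :=
        (((hc.tendsto s₀).sub tendsto_const_nhds).norm).const_mul L
      simpa using this
  have : Filter.Tendsto (fun s => (A s (c s) - A s (c s₀)) + A s (c s₀)) (nhds s₀)
      (nhds (0 + A s₀ (c s₀))) := h1.add (h2.tendsto s₀)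
  simpa [ContinuousAt] using this

lemma brezis_exists {E : Type*} [NormedAddCommGroup E] [NormedSpace ℝ E] [CompleteSpace E]
    (C : Set E) (hCcl : IsClosed C) (hCcv : Convex ℝ C)
    (T : ℝ) (hT : 0 < T) (A : ℝ → E → E) (L M θ : ℝ)
    (hL : 0 < L) (hM : 0 < M) (hθ : 0 < θ)
    (hlip : ∀ t : ℝ, ∀ c₁ ∈ C, ∀ c₂ ∈ C, ‖A t c₁ - A t c₂‖ ≤ L * ‖c₁ - c₂‖)
    (hcont : ∀ c ∈ C, Continuous fun t => A t c)
    (c₀ : E) (hc₀ : c₀ ∈ C)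
    (hMb : ∀ t : ℝ, ‖A t c₀‖ ≤ M)
    (hinv : ∀ c ∈ C, ‖c‖ ≤ (‖c₀‖ + (M + L * ‖c₀‖)/L) * Real.exp (L*T) - (M + L * ‖c₀‖)/L →
      ∀ t : ℝ, c + θ • A t c ∈ C) :
    ∃ c : ℝ → E, (∀ t ∈ Icc (0:ℝ) T, c t ∈ C) ∧ c 0 = c₀ ∧
      (∀ t ∈ Icc (0:ℝ) T, HasDerivWithinAt c (A t (c t)) (Icc (0:ℝ) T) t) ∧
      ContinuousOn (fun t => A t (c t)) (Icc (0:ℝ) T) := by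
  classical
  set b : ℝ := (M + L * ‖c₀‖)/L with hb_def
  have hb : 0 < b := div_pos (by positivity) hL
  set aa : ℝ := ‖c₀‖ + b with haa_def
  have haa : 0 < aa := by positivity
  set ρ : ℝ → ℝ := fun t => aa * Real.exp (L*t) - b with hρ_def
  set R : ℝ := aa * Real.exp (L*T) - b with hR_def
  have hρmono : ∀ s t : ℝ, s ≤ t → ρ s ≤ ρ t := by
    intro s t hst
    have := Real.exp_le_exp.2 (mul_le_mul_of_nonneg_left hst hL.le)
    simp only [hρ_def]
    nlinarith
  have hρ0 : ρ 0 = ‖c₀‖ := by simp [hρ_def, haa_def]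
  have hρR : ∀ t ≤ T, ρ t ≤ R := fun t ht => (hρmono t T ht).trans_eq (by simp [hρ_def, hR_def])
  have hAb : ∀ t : ℝ, ∀ x ∈ C, ‖A t x‖ ≤ L*b + L*‖x‖ := by
    intro t x hx
    have h1 : ‖A t x - A t c₀‖ ≤ L * ‖x - c₀‖ := hlip t x hx c₀ hc₀
    have h2 : ‖A t x‖ ≤ ‖A t x - A t c₀‖ + ‖A t c₀‖ := by
      simpa using norm_add_le (A t x - A t c₀) (A t c₀)
    have h3 : ‖x - c₀‖ ≤ ‖x‖ + ‖c₀‖ := norm_sub_le _ _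
    have h4 : L * b = M + L * ‖c₀‖ := by rw [hb_def]; field_simp
    have := hMb t
    nlinarith
  -- the space
  set X : Set C(Icc (0:ℝ) T, E) := {f | ∀ σ : Icc (0:ℝ) T, f σ ∈ C ∧ ‖f σ‖ ≤ ρ σ} with hX_def
  have hXcl : IsClosed X := by
    have hX2 : X = ⋂ σ : Icc (0:ℝ) T,
        ((fun f : C(Icc (0:ℝ) T, E) => f σ) ⁻¹' (C ∩ Metric.closedBall 0 (ρ σ))) := by
      ext f
      simp [hX_def, Set.mem_iInter, Metric.mem_closedBall, dist_zero_right]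
    rw [hX2]
    exact isClosed_iInter fun σ =>
      (hCcl.inter Metric.isClosed_closedBall).preimage (continuous_eval_const σ)
  haveI : CompleteSpace X := hXcl.completeSpace_coe
  have hmemX : (ContinuousMap.const (Icc (0:ℝ) T) c₀) ∈ X := by
    intro σ
    refine ⟨hc₀, ?_⟩
    simpa [hρ0] using hρmono 0 σ σ.2.1
  haveI : Nonempty X := ⟨⟨_, hmemX⟩⟩
  -- basic maps
  set fe : C(Icc (0:ℝ) T, E) → ℝ → E := fun f s => f (projIcc 0 T hT.le s) with hfe_def
  have hfe_cont : ∀ f, Continuous (fe f) := fun f => f.continuous.comp continuous_projIcc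
  have hfe_eq : ∀ f (σ : Icc (0:ℝ) T), fe f ↑σ = f σ := by
    intro f σ; simp [hfe_def, Set.projIcc_val]
  have hfeC : ∀ f ∈ X, ∀ s : ℝ, fe f s ∈ C := fun f hf s => (hf _).1
  have hfeρ : ∀ f ∈ X, ∀ s : ℝ, s ∈ Icc (0:ℝ) T → ‖fe f s‖ ≤ ρ s := by
    intro f hf s hs
    simp only [hfe_def]
    rw [Set.projIcc_of_mem hT.le hs]
    exact (hf ⟨s, hs⟩).2
  have hfeR : ∀ f ∈ X, ∀ s : ℝ, ‖fe f s‖ ≤ R := by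
    intro f hf s
    exact le_trans (hf (projIcc 0 T hT.le s)).2 (hρR _ (projIcc 0 T hT.le s).2.2)
  have hFeC : ∀ f ∈ X, ∀ s t : ℝ, fe f s + θ • A t (fe f s) ∈ C := by
    intro f hf s t
    exact hinv (fe f s) (hfeC f hf s) (hfeR f hf s) t
  set G : C(Icc (0:ℝ) T, E) → ℝ → E :=
    fun f s => (θ⁻¹ * Real.exp (s/θ)) • (fe f s + θ • A s (fe f s)) with hG_def
  have hFecont : ∀ f ∈ X, Continuous fun s => fe f s + θ • A s (fe f s) := by
    intro f hf
    exact (hfe_cont f).add (continuous_const.smul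
      (contAcomp C A L hlip hcont _ (hfe_cont f) (hfeC f hf)))
  have hwcont : Continuous fun s : ℝ => θ⁻¹ * Real.exp (s/θ) :=
    continuous_const.mul (Real.continuous_exp.comp (continuous_id.div_const θ))
  have hGcont : ∀ f ∈ X, Continuous (G f) := by
    intro f hf
    exact hwcont.smul (hFecont f hf)
  have hGint : ∀ f ∈ X, ∀ u v : ℝ, IntervalIntegrable (G f) MeasureTheory.volume u v :=
    fun f hf u v => (hGcont f hf).intervalIntegrable u v
  set P : C(Icc (0:ℝ) T, E) → ℝ → E :=
    fun f t => Real.exp (-(t/θ)) • (c₀ + ∫ s in (0:ℝ)..t, G f s) with hP_def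
  have hPderiv : ∀ f ∈ X, ∀ t : ℝ,
      HasDerivAt (fun u => ∫ s in (0:ℝ)..u, G f s) (G f t) t := by
    intro f hf t
    exact intervalIntegral.integral_hasDerivAt_right (hGint f hf 0 t)
      ((hGcont f hf).stronglyMeasurableAtFilter _ _) (hGcont f hf).continuousAt
  have hPcont : ∀ f ∈ X, Continuous (P f) := by
    intro f hf
    have h1 : Continuous fun u : ℝ => ∫ s in (0:ℝ)..u, G f s := by
      rw [continuous_iff_continuousAt]; exact fun t => (hPderiv f hf t).continuousAt
    exact (Real.continuous_exp.comp (continuous_id.div_const θ).neg).smul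
      (continuous_const.add h1)
  -- weight integral computations
  have hIw : ∀ (K t : ℝ), ∫ s in (0:ℝ)..t, (θ⁻¹ * Real.exp (s/θ)) * K
      = (Real.exp (t/θ) - 1) * K := by
    intro K t
    have h1 : (fun s => (θ⁻¹ * Real.exp (s/θ)) * K) = fun s => (θ⁻¹*K) * Real.exp (θ⁻¹*s) := by
      funext s; rw [div_eq_inv_mul]; ring
    rw [h1, intervalIntegral.integral_const_mul, int_exp_mul θ⁻¹ (inv_ne_zero hθ.ne') t,
      div_eq_inv_mul t θ]
    field_simp
  have hIwL : ∀ t : ℝ, ∫ s in (0:ℝ)..t, (θ⁻¹ * Real.exp (s/θ)) * Real.exp (L*s)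
      = θ⁻¹/(θ⁻¹+L) * (Real.exp ((θ⁻¹+L)*t) - 1) := by
    intro t
    have hpos : (0:ℝ) < θ⁻¹ + L := by positivity
    have h1 : (fun s => (θ⁻¹ * Real.exp (s/θ)) * Real.exp (L*s))
        = fun s => θ⁻¹ * Real.exp ((θ⁻¹+L)*s) := by
      funext s; rw [div_eq_inv_mul, mul_assoc, ← Real.exp_add]; ring_nf
    rw [h1, intervalIntegral.integral_const_mul, int_exp_mul _ hpos.ne' t]
    ring
  -- membership
  have hPmem : ∀ f ∈ X, ∀ t : ℝ, 0 ≤ t → P f t ∈ C := by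
    intro f hf t ht
    by_contra hnot
    obtain ⟨ℓ, u, hu1, hu2⟩ := geometric_hahn_banach_closed_point hCcv hCcl hnot
    have hℓcont : Continuous fun s => ℓ (fe f s + θ • A s (fe f s)) :=
      ℓ.continuous.comp (hFecont f hf)
    have hℓint : ℓ (P f t) = Real.exp (-(t/θ)) *
        (ℓ c₀ + ∫ s in (0:ℝ)..t, (θ⁻¹ * Real.exp (s/θ)) * ℓ (fe f s + θ • A s (fe f s))) := by
      simp only [hP_def]
      rw [ℓ.map_smul, ℓ.map_add, ← ContinuousLinearMap.intervalIntegral_comp_comm ℓ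
        (hGint f hf 0 t)]
      simp only [hG_def, ℓ.map_smul, smul_eq_mul]
    have hmono : ∫ s in (0:ℝ)..t, (θ⁻¹ * Real.exp (s/θ)) * ℓ (fe f s + θ • A s (fe f s))
        ≤ ∫ s in (0:ℝ)..t, (θ⁻¹ * Real.exp (s/θ)) * u := by
      apply intervalIntegral.integral_mono_on ht
        ((hwcont.mul hℓcont).intervalIntegrable 0 t)
        ((hwcont.mul continuous_const).intervalIntegrable 0 t)
      intro s _
      exact mul_le_mul_of_nonneg_left (hu1 _ (hFeC f hf s s)).le (by positivity)
    rw [hIw u t] at hmono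
    have hee : Real.exp (-(t/θ)) * Real.exp (t/θ) = 1 := by
      rw [← Real.exp_add]; simp
    have hexp_pos : (0:ℝ) < Real.exp (-(t/θ)) := Real.exp_pos _
    have hc₀u : ℓ c₀ < u := hu1 c₀ hc₀
    have hfin : ℓ (P f t) ≤ u := by
      rw [hℓint]
      have h5 : ℓ c₀ + (∫ s in (0:ℝ)..t,
          (θ⁻¹ * Real.exp (s/θ)) * ℓ (fe f s + θ • A s (fe f s)))
          ≤ u + (Real.exp (t/θ) - 1) * u := by linarith
      calc Real.exp (-(t/θ)) * (ℓ c₀ + ∫ s in (0:ℝ)..t,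
            (θ⁻¹ * Real.exp (s/θ)) * ℓ (fe f s + θ • A s (fe f s)))
          ≤ Real.exp (-(t/θ)) * (u + (Real.exp (t/θ) - 1) * u) :=
            mul_le_mul_of_nonneg_left h5 hexp_pos.le
        _ = u := by linear_combination u * hee
    linarith
  -- the bound
  have hcontLs : Continuous fun s : ℝ => Real.exp (L*s) :=
    Real.continuous_exp.comp (continuous_const.mul continuous_id)
  have hdom1cont : Continuous fun s : ℝ =>
      ((1+θ*L) * aa) * ((θ⁻¹ * Real.exp (s/θ)) * Real.exp (L*s)) - b * (θ⁻¹ * Real.exp (s/θ)) :=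
    (continuous_const.mul (hwcont.mul hcontLs)).sub (continuous_const.mul hwcont)
  have hPρ : ∀ f ∈ X, ∀ t ∈ Icc (0:ℝ) T, ‖P f t‖ ≤ ρ t := by
    intro f hf t ht
    have hnormint : ‖∫ s in (0:ℝ)..t, G f s‖ ≤ ∫ s in (0:ℝ)..t, ‖G f s‖ :=
      intervalIntegral.norm_integral_le_integral_norm ht.1
    have hbound : ∫ s in (0:ℝ)..t, ‖G f s‖
        ≤ ∫ s in (0:ℝ)..t, ((1+θ*L) * aa) * ((θ⁻¹ * Real.exp (s/θ)) * Real.exp (L*s))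
            - b * (θ⁻¹ * Real.exp (s/θ)) := by
      apply intervalIntegral.integral_mono_on ht.1
        ((hGcont f hf).norm.intervalIntegrable 0 t)
        (hdom1cont.intervalIntegrable 0 t)
      intro s hs
      have hsI : s ∈ Icc (0:ℝ) T := ⟨hs.1, hs.2.trans ht.2⟩
      have hfes : ‖fe f s‖ ≤ ρ s := hfeρ f hf s hsI
      have hAs : ‖A s (fe f s)‖ ≤ L*b + L*‖fe f s‖ := hAb s _ (hfeC f hf s)
      have hw_pos : 0 < θ⁻¹ * Real.exp (s/θ) := by positivity
      have hnorm : ‖G f s‖ = (θ⁻¹ * Real.exp (s/θ)) * ‖fe f s + θ • A s (fe f s)‖ := by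
        simp only [hG_def]
        rw [norm_smul, Real.norm_eq_abs, abs_of_pos hw_pos]
      rw [hnorm]
      have h1 : ‖fe f s + θ • A s (fe f s)‖ ≤ ‖fe f s‖ + θ * ‖A s (fe f s)‖ := by
        calc ‖fe f s + θ • A s (fe f s)‖ ≤ ‖fe f s‖ + ‖θ • A s (fe f s)‖ := norm_add_le _ _
          _ = ‖fe f s‖ + θ * ‖A s (fe f s)‖ := by
              rw [norm_smul, Real.norm_eq_abs, abs_of_pos hθ]
      have h2 : ‖fe f s + θ • A s (fe f s)‖ ≤ (1+θ*L) * (aa * Real.exp (L*s)) - b := by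
        have hρs : ρ s = aa * Real.exp (L*s) - b := by simp [hρ_def]
        rw [hρs] at hfes
        nlinarith [mul_le_mul_of_nonneg_left hAs hθ.le,
          mul_le_mul_of_nonneg_left hfes (by positivity : (0:ℝ) ≤ 1+θ*L)]
      calc (θ⁻¹ * Real.exp (s/θ)) * ‖fe f s + θ • A s (fe f s)‖
          ≤ (θ⁻¹ * Real.exp (s/θ)) * ((1+θ*L) * (aa * Real.exp (L*s)) - b) :=
            mul_le_mul_of_nonneg_left h2 hw_pos.le
        _ = ((1+θ*L) * aa) * ((θ⁻¹ * Real.exp (s/θ)) * Real.exp (L*s))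
            - b * (θ⁻¹ * Real.exp (s/θ)) := by ring
    have hIcalc : ∫ s in (0:ℝ)..t, ((1+θ*L) * aa) * ((θ⁻¹ * Real.exp (s/θ)) * Real.exp (L*s))
            - b * (θ⁻¹ * Real.exp (s/θ))
        = aa * (Real.exp (L*t) * Real.exp (t/θ)) - aa - b * Real.exp (t/θ) + b := by
      rw [intervalIntegral.integral_sub, intervalIntegral.integral_const_mul,
        intervalIntegral.integral_const_mul, hIwL t]
      · have h1 : ∫ s in (0:ℝ)..t, θ⁻¹ * Real.exp (s/θ) = Real.exp (t/θ) - 1 := by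
          have := hIw 1 t
          simpa using this
        rw [h1]
        have hpos : (0:ℝ) < θ⁻¹ + L := by positivity
        have hee : Real.exp ((θ⁻¹+L)*t) = Real.exp (t/θ) * Real.exp (L*t) := by
          rw [← Real.exp_add, div_eq_inv_mul]; ring_nf
        have hcoef : ((1:ℝ)+θ*L) * aa * (θ⁻¹/(θ⁻¹+L)) = aa := by
          field_simp
        rw [hee]
        field_simp
        ring
      · exact (continuous_const.mul (hwcont.mul hcontLs)).intervalIntegrable 0 t
      · exact (continuous_const.mul hwcont).intervalIntegrable 0 t
    have hnormP : ‖P f t‖ ≤ Real.exp (-(t/θ)) *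
        (‖c₀‖ + (aa * (Real.exp (L*t) * Real.exp (t/θ)) - aa - b * Real.exp (t/θ) + b)) := by
      simp only [hP_def]
      rw [norm_smul, Real.norm_eq_abs, abs_of_pos (Real.exp_pos _)]
      apply mul_le_mul_of_nonneg_left _ (Real.exp_pos _).le
      calc ‖c₀ + ∫ s in (0:ℝ)..t, G f s‖ ≤ ‖c₀‖ + ‖∫ s in (0:ℝ)..t, G f s‖ := norm_add_le _ _
        _ ≤ _ := by
            have := hnormint.trans (hbound.trans_eq hIcalc)
            linarith
    refine hnormP.trans ?_
    have hee : Real.exp (-(t/θ)) * Real.exp (t/θ) = 1 := by rw [← Real.exp_add]; simp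
    have hc₀aa : ‖c₀‖ = aa - b := by rw [haa_def]; ring
    have hρt : ρ t = aa * Real.exp (L*t) - b := by simp [hρ_def]
    rw [hρt, hc₀aa]
    exact le_of_eq (by linear_combination (aa * Real.exp (L*t) - b) * hee)
  -- the operator
  have hPcontI : ∀ f ∈ X, Continuous fun σ : Icc (0:ℝ) T => P f ↑σ :=
    fun f hf => (hPcont f hf).comp continuous_subtype_val
  have hPX : ∀ (f : C(Icc (0:ℝ) T, E)) (hf : f ∈ X),
      (⟨fun σ => P f ↑σ, hPcontI f hf⟩ : C(Icc (0:ℝ) T, E)) ∈ X := by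
    intro f hf σ
    exact ⟨hPmem f hf σ σ.2.1, hPρ f hf σ σ.2⟩
  set Psi : X → X := fun f => ⟨⟨fun σ => P f.1 ↑σ, hPcontI f.1 f.2⟩, hPX f.1 f.2⟩ with hPsi_def
  obtain ⟨β, hβ_def⟩ : ∃ x : ℝ, x = θ⁻¹ * (1 + θ*L) := ⟨_, rfl⟩
  have hβpos : 0 < β := by rw [hβ_def]; positivity
  have hiter : ∀ n : ℕ, ∀ f g : X, ∀ σ : Icc (0:ℝ) T,
      ‖(Psi^[n] f).1 σ - (Psi^[n] g).1 σ‖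
        ≤ (β * (σ:ℝ))^n / (n.factorial : ℝ) * dist f g := by
    intro n
    induction n with
    | zero =>
      intro f g σ
      simp only [Function.iterate_zero, id_eq, pow_zero, Nat.factorial_zero, Nat.cast_one,
        div_one, one_mul]
      rw [← dist_eq_norm]
      calc dist (f.1 σ) (g.1 σ) ≤ dist f.1 g.1 := ContinuousMap.dist_apply_le_dist σ
        _ = dist f g := (Subtype.dist_eq f g).symm
    | succ n ih =>
      intro f g σ
      rw [Function.iterate_succ_apply', Function.iterate_succ_apply']
      set a := Psi^[n] f with ha_def
      set a' := Psi^[n] g with ha'_def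
      set t : ℝ := ↑σ with ht_def
      have ht0 : 0 ≤ t := σ.2.1
      have htT : t ≤ T := σ.2.2
      have hval : ∀ h : X, (Psi h).1 σ = P h.1 t := fun h => rfl
      rw [hval, hval]
      set D : ℝ := dist f g with hD_def
      have hD0 : 0 ≤ D := dist_nonneg
      have hee : Real.exp (-(t/θ)) * Real.exp (t/θ) = 1 := by rw [← Real.exp_add]; simp
      have hsub : P a.1 t - P a'.1 t
          = Real.exp (-(t/θ)) • (∫ s in (0:ℝ)..t, (G a.1 s - G a'.1 s)) := by
        simp only [hP_def]
        rw [intervalIntegral.integral_sub (hGint a.1 a.2 0 t) (hGint a'.1 a'.2 0 t), ← smul_sub]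
        congr 1
        abel
      set K2 : ℝ := (θ⁻¹ * Real.exp (t/θ)) * (1+θ*L) * ((β^n / (n.factorial : ℝ)) * D)
        with hK2_def
      have hK2' : 0 ≤ (θ⁻¹ * Real.exp (t/θ)) * (1+θ*L) := by positivity
      have hptwise : ∀ s ∈ Icc (0:ℝ) t, ‖G a.1 s - G a'.1 s‖ ≤ K2 * s^n := by
        intro s hs
        have hsI : s ∈ Icc (0:ℝ) T := ⟨hs.1, hs.2.trans htT⟩
        have hGdiff : G a.1 s - G a'.1 s = (θ⁻¹ * Real.exp (s/θ)) •
            ((fe a.1 s - fe a'.1 s) + θ • (A s (fe a.1 s) - A s (fe a'.1 s))) := by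
          simp only [hG_def]
          rw [← smul_sub]
          congr 1
          rw [smul_sub]
          abel
        have hw_pos : 0 < θ⁻¹ * Real.exp (s/θ) := by positivity
        have hΔA : ‖A s (fe a.1 s) - A s (fe a'.1 s)‖ ≤ L * ‖fe a.1 s - fe a'.1 s‖ :=
          hlip s _ (hfeC a.1 a.2 s) _ (hfeC a'.1 a'.2 s)
        have hΔfe : ‖fe a.1 s - fe a'.1 s‖ ≤ (β*s)^n / (n.factorial : ℝ) * D := by
          have h1 : fe a.1 s = a.1 ⟨s, hsI⟩ := by
            simp only [hfe_def]; rw [Set.projIcc_of_mem hT.le hsI]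
          have h2 : fe a'.1 s = a'.1 ⟨s, hsI⟩ := by
            simp only [hfe_def]; rw [Set.projIcc_of_mem hT.le hsI]
          rw [h1, h2]
          exact ih f g ⟨s, hsI⟩
        have hnormdiff : ‖(fe a.1 s - fe a'.1 s) + θ • (A s (fe a.1 s) - A s (fe a'.1 s))‖
            ≤ (1+θ*L) * ((β*s)^n / (n.factorial : ℝ) * D) := by
          have h3 : ‖θ • (A s (fe a.1 s) - A s (fe a'.1 s))‖
              = θ * ‖A s (fe a.1 s) - A s (fe a'.1 s)‖ := by
            rw [norm_smul, Real.norm_eq_abs, abs_of_pos hθ]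
          have h4 := norm_add_le (fe a.1 s - fe a'.1 s)
            (θ • (A s (fe a.1 s) - A s (fe a'.1 s)))
          nlinarith [mul_le_mul_of_nonneg_left hΔA hθ.le,
            mul_le_mul_of_nonneg_left hΔfe (by positivity : (0:ℝ) ≤ 1+θ*L)]
        have hwle : θ⁻¹ * Real.exp (s/θ) ≤ θ⁻¹ * Real.exp (t/θ) := by
          have h6 : s/θ ≤ t/θ := (div_le_div_iff_of_pos_right hθ).2 hs.2
          exact mul_le_mul_of_nonneg_left (Real.exp_le_exp.2 h6) (by positivity)
        rw [hGdiff, norm_smul, Real.norm_eq_abs, abs_of_pos hw_pos]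
        have hβs : (β*s)^n = β^n * s^n := mul_pow β s n
        calc (θ⁻¹ * Real.exp (s/θ)) *
              ‖(fe a.1 s - fe a'.1 s) + θ • (A s (fe a.1 s) - A s (fe a'.1 s))‖
            ≤ (θ⁻¹ * Real.exp (t/θ)) * ((1+θ*L) * ((β*s)^n / (n.factorial : ℝ) * D)) := by
              apply mul_le_mul hwle hnormdiff (norm_nonneg _) (by positivity)
          _ = K2 * s^n := by rw [hK2_def, hβs]; ring
      have hKn : 0 ≤ K2 := by
        rw [hK2_def]
        positivity
      have hintle : ‖∫ s in (0:ℝ)..t, (G a.1 s - G a'.1 s)‖ ≤ K2 * (t^(n+1) / ((n:ℝ)+1)) := by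
        calc ‖∫ s in (0:ℝ)..t, (G a.1 s - G a'.1 s)‖
            ≤ ∫ s in (0:ℝ)..t, ‖G a.1 s - G a'.1 s‖ :=
              intervalIntegral.norm_integral_le_integral_norm ht0
          _ ≤ ∫ s in (0:ℝ)..t, K2 * s^n := by
              apply intervalIntegral.integral_mono_on ht0
                (((hGcont a.1 a.2).sub (hGcont a'.1 a'.2)).norm.intervalIntegrable 0 t)
                ((continuous_const.mul (continuous_pow n)).intervalIntegrable 0 t)
              exact hptwise
          _ = K2 * (t^(n+1) / ((n:ℝ)+1)) := by
              rw [intervalIntegral.integral_const_mul, integral_pow]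
              norm_num
      have hfa : (((n+1).factorial : ℕ) : ℝ) = ((n:ℝ)+1) * (n.factorial : ℝ) := by
        rw [Nat.factorial_succ]
        push_cast
        ring
      calc ‖P a.1 t - P a'.1 t‖
          = Real.exp (-(t/θ)) * ‖∫ s in (0:ℝ)..t, (G a.1 s - G a'.1 s)‖ := by
            rw [hsub, norm_smul, Real.norm_eq_abs, abs_of_pos (Real.exp_pos _)]
        _ ≤ Real.exp (-(t/θ)) * (K2 * (t^(n+1) / ((n:ℝ)+1))) :=
            mul_le_mul_of_nonneg_left hintle (Real.exp_pos _).le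
        _ = (Real.exp (-(t/θ)) * Real.exp (t/θ)) * ((θ⁻¹*(1+θ*L))
              * (β^n * t^(n+1) * D / ((n:ℝ)+1) / ((n.factorial : ℕ):ℝ))) := by
            rw [hK2_def]; ring
        _ = (β * t)^(n+1) / (((n+1).factorial : ℕ) : ℝ) * D := by
            rw [hee, ← hβ_def, hfa, mul_pow, pow_succ]
            have h7 : ((n.factorial : ℕ) : ℝ) ≠ 0 := by
              exact_mod_cast (Nat.factorial_pos n).ne'
            have h8 : ((n:ℝ)+1) ≠ 0 := by positivity
            field_simp
            ring
        _ = (β * (σ:ℝ))^(n+1) / (((n+1).factorial : ℕ) : ℝ) * dist f g := by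
            rw [ht_def, hD_def]
  -- contraction and fixed point
  have hdistiter : ∀ (n : ℕ) (f g : X), dist (Psi^[n] f) (Psi^[n] g)
      ≤ (β*T)^n / (n.factorial : ℝ) * dist f g := by
    intro n f g
    have hF : (0:ℝ) < (n.factorial : ℝ) := by exact_mod_cast n.factorial_pos
    rw [Subtype.dist_eq, ContinuousMap.dist_le (by positivity)]
    intro σ
    rw [dist_eq_norm]
    refine (hiter n f g σ).trans ?_
    have h1 : (β * (σ:ℝ))^n ≤ (β*T)^n := by
      apply pow_le_pow_left₀ (mul_nonneg hβpos.le σ.2.1)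
      exact mul_le_mul_of_nonneg_left σ.2.2 hβpos.le
    exact mul_le_mul_of_nonneg_right ((div_le_div_iff_of_pos_right hF).2 h1) dist_nonneg
  obtain ⟨n₀, hn₀⟩ : ∃ n : ℕ, (β*T)^n / (n.factorial : ℝ) < 1 := by
    have h := FloorSemiring.tendsto_pow_div_factorial_atTop (K := ℝ) (β*T)
    exact (h.eventually_lt_const one_pos).exists
  set K : ℝ := (β*T)^n₀ / (n₀.factorial : ℝ) with hK_def
  have hK0 : 0 ≤ K := by
    rw [hK_def]
    have hF : (0:ℝ) < (n₀.factorial : ℝ) := by exact_mod_cast n₀.factorial_pos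
    positivity
  have hcontr : ContractingWith K.toNNReal (Psi^[n₀]) := by
    constructor
    · rw [← NNReal.coe_lt_coe, Real.coe_toNNReal _ hK0, NNReal.coe_one]
      exact hn₀
    · apply LipschitzWith.of_dist_le_mul
      intro f g
      rw [Real.coe_toNNReal _ hK0]
      exact hdistiter n₀ f g
  set x : X := ContractingWith.fixedPoint (Psi^[n₀]) hcontr with hx_def
  have hxfix : Psi x = x := hcontr.isFixedPt_fixedPoint_iterate
  have hxeq : ∀ σ : Icc (0:ℝ) T, P x.1 ↑σ = x.1 σ := by
    intro σ
    conv_rhs => rw [← hxfix]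
    rfl
  have hPt_eq : ∀ t, t ∈ Icc (0:ℝ) T → P x.1 t = fe x.1 t := by
    intro t ht
    have h2 : fe x.1 t = x.1 ⟨t, ht⟩ := by
      simp only [hfe_def]; rw [Set.projIcc_of_mem hT.le ht]
    rw [h2]
    exact hxeq ⟨t, ht⟩
  refine ⟨P x.1, ?_, ?_, ?_, ?_⟩
  · intro t ht
    exact hPmem x.1 x.2 t ht.1
  · simp [hP_def, intervalIntegral.integral_same]
  · intro t ht
    have hee : Real.exp (-(t/θ)) * Real.exp (t/θ) = 1 := by rw [← Real.exp_add]; simp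
    have h1 : HasDerivAt (fun u => c₀ + ∫ s in (0:ℝ)..u, G x.1 s) (G x.1 t) t :=
      (hPderiv x.1 x.2 t).const_add c₀
    have h2 : HasDerivAt (fun u : ℝ => Real.exp (-(u/θ))) (Real.exp (-(t/θ)) * -(1/θ)) t := by
      have h0 : HasDerivAt (fun u : ℝ => -(u/θ)) (-(1/θ)) t := ((hasDerivAt_id t).div_const θ).neg
      simpa using h0.exp
    have h3 := h2.smul h1
    have hGx : G x.1 t = (θ⁻¹ * Real.exp (t/θ)) • (fe x.1 t + θ • A t (fe x.1 t)) := rfl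
    have hVx : Real.exp (-(t/θ)) • (c₀ + ∫ s in (0:ℝ)..t, G x.1 s) = fe x.1 t := hPt_eq t ht
    have h4 : Real.exp (-(t/θ)) • G x.1 t
        + (Real.exp (-(t/θ)) * -(1/θ)) • (c₀ + ∫ s in (0:ℝ)..t, G x.1 s)
        = A t (fe x.1 t) := by
      rw [hGx, smul_smul]
      rw [show Real.exp (-(t/θ)) * (θ⁻¹ * Real.exp (t/θ)) = θ⁻¹ by
        rw [mul_comm θ⁻¹ (Real.exp (t/θ)), ← mul_assoc, hee, one_mul]]
      rw [mul_comm (Real.exp (-(t/θ))) (-(1/θ)), ← smul_smul, hVx]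
      rw [smul_add, smul_smul, inv_mul_cancel₀ hθ.ne', one_smul, one_div, neg_smul]
      abel
    have h5 : HasDerivAt (P x.1) (A t (fe x.1 t)) t := h4 ▸ h3
    rw [hPt_eq t ht]
    exact h5.hasDerivWithinAt
  · have hAcont : Continuous fun s => A s (fe x.1 s) :=
      contAcomp C A L hlip hcont _ (hfe_cont x.1) (hfeC x.1 x.2)
    refine ContinuousOn.congr hAcont.continuousOn ?_
    intro t ht
    simp only
    rw [hPt_eq t ht]

/-- Brezis existence-and-invariance theorem for ODEs in Banach spaces
(Theorem A.1 of the paper): existence and uniqueness of a C¹ curve in the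
closed convex set `C` solving `c' = A(t, c)` with prescribed initial datum. -/
theorem brezis_existence_uniqueness
    {E : Type*} [NormedAddCommGroup E] [NormedSpace ℝ E] [CompleteSpace E]
    (C : Set E) (hCne : C.Nonempty) (hCcl : IsClosed C) (hCcv : Convex ℝ C)
    (T : ℝ) (hT : 0 < T) (A : ℝ → E → E) (L : ℝ) (hL : 0 ≤ L)
    (hlip : ∀ t ∈ Icc (0:ℝ) T, ∀ c₁ ∈ C, ∀ c₂ ∈ C,
      ‖A t c₁ - A t c₂‖ ≤ L * ‖c₁ - c₂‖)
    (hcont : ∀ c ∈ C, ContinuousOn (fun t => A t c) (Icc (0:ℝ) T))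
    (hinv : ∀ R > (0:ℝ), ∃ θ > (0:ℝ), ∀ c ∈ C, ‖c‖ ≤ R →
      ∀ t ∈ Icc (0:ℝ) T, c + θ • A t c ∈ C)
    (c₀ : E) (hc₀ : c₀ ∈ C) :
    (∃ c : ℝ → E,
      (∀ t ∈ Icc (0:ℝ) T, c t ∈ C) ∧ c 0 = c₀ ∧
      (∀ t ∈ Icc (0:ℝ) T, HasDerivWithinAt c (A t (c t)) (Icc (0:ℝ) T) t) ∧
      ContinuousOn (fun t => A t (c t)) (Icc (0:ℝ) T)) ∧
    (∀ c₁ c₂ : ℝ → E,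
      ((∀ t ∈ Icc (0:ℝ) T, c₁ t ∈ C) ∧ c₁ 0 = c₀ ∧
        (∀ t ∈ Icc (0:ℝ) T, HasDerivWithinAt c₁ (A t (c₁ t)) (Icc (0:ℝ) T) t) ∧
        ContinuousOn (fun t => A t (c₁ t)) (Icc (0:ℝ) T)) →
      ((∀ t ∈ Icc (0:ℝ) T, c₂ t ∈ C) ∧ c₂ 0 = c₀ ∧
        (∀ t ∈ Icc (0:ℝ) T, HasDerivWithinAt c₂ (A t (c₂ t)) (Icc (0:ℝ) T) t) ∧
        ContinuousOn (fun t => A t (c₂ t)) (Icc (0:ℝ) T)) →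
      ∀ t ∈ Icc (0:ℝ) T, c₁ t = c₂ t) := by
  classical
  set pr : ℝ → ℝ := fun t => min T (max 0 t) with hpr_def
  have hprmem : ∀ t, pr t ∈ Icc (0:ℝ) T := fun t =>
    ⟨le_min hT.le (le_max_left 0 t), min_le_left _ _⟩
  have hprcont : Continuous pr := continuous_const.min (continuous_const.max continuous_id)
  have hpreq : ∀ t ∈ Icc (0:ℝ) T, pr t = t := by
    intro t ht
    simp only [hpr_def]
    rw [max_eq_right ht.1, min_eq_right ht.2]
  set B : ℝ → E → E := fun t x => A (pr t) x with hB_def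
  have hBA : ∀ (c : ℝ → E), ∀ t ∈ Icc (0:ℝ) T, B t (c t) = A t (c t) := by
    intro c t ht
    simp only [hB_def]
    rw [hpreq t ht]
  have hlipB : ∀ t : ℝ, ∀ c₁ ∈ C, ∀ c₂ ∈ C, ‖B t c₁ - B t c₂‖ ≤ (L+1) * ‖c₁ - c₂‖ := by
    intro t c₁ h1 c₂ h2
    refine (hlip (pr t) (hprmem t) c₁ h1 c₂ h2).trans ?_
    nlinarith [norm_nonneg (c₁ - c₂)]
  have hcontB : ∀ c ∈ C, Continuous fun t => B t c := fun c hc =>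
    (hcont c hc).comp_continuous hprcont hprmem
  obtain ⟨M₀, hM₀⟩ := isCompact_Icc.exists_bound_of_continuousOn (hcont c₀ hc₀)
  have hMB : ∀ t : ℝ, ‖B t c₀‖ ≤ M₀ + 1 := fun t => (hM₀ (pr t) (hprmem t)).trans (by linarith)
  have hM1 : 0 < M₀ + 1 := by
    have := (norm_nonneg (A (pr 0) c₀)).trans (hM₀ (pr 0) (hprmem 0))
    linarith
  have hL' : 0 < L + 1 := by linarith
  set R : ℝ := (‖c₀‖ + ((M₀+1) + (L+1) * ‖c₀‖)/(L+1)) * Real.exp ((L+1)*T)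
    - ((M₀+1) + (L+1) * ‖c₀‖)/(L+1) with hR_def
  have hb' : 0 < ((M₀+1) + (L+1) * ‖c₀‖)/(L+1) := div_pos (by positivity) hL'
  have hRpos : 0 < R := by
    rw [hR_def]
    have h1 : 1 < Real.exp ((L+1)*T) := by
      have := Real.add_one_le_exp ((L+1)*T)
      nlinarith
    nlinarith [norm_nonneg c₀]
  obtain ⟨θ, hθ, hθinv⟩ := hinv R hRpos
  have hinvB : ∀ c ∈ C, ‖c‖ ≤ R → ∀ t : ℝ, c + θ • B t c ∈ C :=
    fun c hc hcn t => hθinv c hc hcn (pr t) (hprmem t)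
  obtain ⟨c, hmem, h0, hderiv, hcont'⟩ := brezis_exists C hCcl hCcv T hT B (L+1) (M₀+1) θ
    hL' hM1 hθ hlipB hcontB c₀ hc₀ hMB hinvB
  constructor
  · refine ⟨c, hmem, h0, ?_, ?_⟩
    · intro t ht
      have h := hderiv t ht
      rwa [hBA c t ht] at h
    · refine ContinuousOn.congr hcont' ?_
      intro t ht
      simp only
      rw [← hBA c t ht]
  · rintro c₁ c₂ ⟨hm1, h01, hd1, -⟩ ⟨hm2, h02, hd2, -⟩ t ht
    have hvlip : ∀ s : ℝ, LipschitzOnWith (Real.toNNReal L) (B s) C := by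
      intro s
      apply LipschitzOnWith.of_dist_le_mul
      intro p hp q hq
      rw [Real.coe_toNNReal _ hL, dist_eq_norm, dist_eq_norm]
      exact hlip (pr s) (hprmem s) p hp q hq
    have hIci : ∀ s ∈ Ico (0:ℝ) T, Icc (0:ℝ) T ∈ nhdsWithin s (Ici s) := by
      intro s hs
      rw [mem_nhdsWithin]
      exact ⟨Iio T, isOpen_Iio, hs.2, fun y hy => ⟨hs.1.trans hy.2, le_of_lt hy.1⟩⟩
    have hd1' : ∀ s ∈ Ico (0:ℝ) T, HasDerivWithinAt c₁ (B s (c₁ s)) (Ici s) s := by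
      intro s hs
      have h := hd1 s (Ico_subset_Icc_self hs)
      rw [← hBA c₁ s (Ico_subset_Icc_self hs)] at h
      exact h.mono_of_mem_nhdsWithin (hIci s hs)
    have hd2' : ∀ s ∈ Ico (0:ℝ) T, HasDerivWithinAt c₂ (B s (c₂ s)) (Ici s) s := by
      intro s hs
      have h := hd2 s (Ico_subset_Icc_self hs)
      rw [← hBA c₂ s (Ico_subset_Icc_self hs)] at h
      exact h.mono_of_mem_nhdsWithin (hIci s hs)
    have hc1cont : ContinuousOn c₁ (Icc (0:ℝ) T) :=
      fun s hs => (hd1 s hs).continuousWithinAt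
    have hc2cont : ContinuousOn c₂ (Icc (0:ℝ) T) :=
      fun s hs => (hd2 s hs).continuousWithinAt
    exact ODE_solution_unique_of_mem_Icc_right (v := B) (s := fun _ => C) (fun s _ => hvlip s)
      hc1cont hd1' (fun s hs => hm1 s (Ico_subset_Icc_self hs))
      hc2cont hd2' (fun s hs => hm2 s (Ico_subset_Icc_self hs))
      (h01.trans h02.symm) ht
end

section
/- Let E be a real Banach space, let C be a nonempty closed convex subset of E, let T > 0, and let A : [0,T] × C → E satisfy: (i') for every R > 0 there exists a constant L_R ≥ 0 such that ‖A(t,c₁) − A(t,c₂)‖ ≤ L_R‖c₁ − c₂‖ for every c₁, c₂ ∈ C with ‖c₁‖ ≤ R and ‖c₂‖ ≤ R and every t ∈ [0,T]; (ii) for every c ∈ C the map t ↦ A(t,c) is continuous on [0,T]; (iii) for every R > 0 there exists θ > 0 such that c ∈ C with ‖c‖ ≤ R implies c + θ·A(t,c) ∈ C for all t ∈ [0,T]; (ii') there exists M > 0 such that ‖A(t,c)‖ ≤ M(1 + ‖c‖) for every c ∈ C and t ∈ [0,T]. Then for every c̄ ∈ C there exists a unique curve c : [0,T] → E of class C¹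 such that c(t) ∈ C for all t ∈ [0,T], c(0) = c̄, and c'(t) = A(t, c(t)) for all t ∈ [0,T]. -/
open Set MeasureTheory intervalIntegral Function Filter Topology
open scoped NNReal ENNReal

namespace BrezisAux

variable {E : Type*} [NormedAddCommGroup E] [NormedSpace ℝ E]

/-- Continuity of `t ↦ A t (u t)` along a continuous curve with values in `C`,
assuming a Lipschitz bound on the ball of radius `R` and continuity in time. -/
theorem contOn_comp {A : ℝ → E → E} {C : Set E} {S : Set ℝ} {R L : ℝ}
    (hlip : ∀ t ∈ S, ∀ c₁ ∈ C, ‖c₁‖ ≤ R → ∀ c₂ ∈ C, ‖c₂‖ ≤ R →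
      ‖A t c₁ - A t c₂‖ ≤ L * ‖c₁ - c₂‖)
    (hcont : ∀ c ∈ C, ContinuousOn (fun t => A t c) S)
    {u : ℝ → E} (hu : ContinuousOn u S) (humem : ∀ s ∈ S, u s ∈ C)
    (hunorm : ∀ s ∈ S, ‖u s‖ ≤ R) :
    ContinuousOn (fun s => A s (u s)) S := by
  intro s₀ hs₀
  have h1 : ContinuousWithinAt (fun s => A s (u s₀)) S s₀ :=
    hcont (u s₀) (humem s₀ hs₀) s₀ hs₀
  have h2 : Tendsto (fun s => A s (u s) - A s (u s₀)) (𝓝[S] s₀) (𝓝 0) := by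
    have hb : Tendsto (fun s => L * ‖u s - u s₀‖) (𝓝[S] s₀) (𝓝 (L * ‖u s₀ - u s₀‖)) :=
      tendsto_const_nhds.mul (((hu s₀ hs₀).sub tendsto_const_nhds).norm)
    rw [sub_self, norm_zero, mul_zero] at hb
    apply squeeze_zero_norm' _ hb
    filter_upwards [self_mem_nhdsWithin] with s hs
    exact hlip s hs (u s) (humem s hs) (hunorm s hs) (u s₀) (humem s₀ hs₀) (hunorm s₀ hs₀)
  have h3 : Tendsto (fun s => A s (u s) - A s (u s₀) + A s (u s₀)) (𝓝[S] s₀)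
      (𝓝 (0 + A s₀ (u s₀))) := h2.add h1
  simpa [ContinuousWithinAt] using h3

/-- A normalized weighted average of a continuous curve with values in a closed
convex set belongs to the set. -/
theorem convex_integral_mem [CompleteSpace E] {C : Set E} (hCcl : IsClosed C)
    (hCcv : Convex ℝ C) {t : ℝ} (ht : 0 < t) {w : ℝ → ℝ} (hw : Continuous w)
    (hw0 : ∀ s, 0 ≤ w s) {g : ℝ → E} (hg : ContinuousOn g (Icc 0 t))
    (hgmem : ∀ s ∈ Icc 0 t, g s ∈ C) {b : ℝ} (hb : 0 < b)
    (hbval : (∫ s in (0:ℝ)..t, w s) = b) :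
    b⁻¹ • (∫ s in (0:ℝ)..t, w s • g s) ∈ C := by
  classical
  set f₀ : ℝ → ℝ≥0 := fun s => Real.toNNReal (w s) with hf₀
  have hf₀meas : Measurable f₀ := hw.measurable.real_toNNReal
  set μ0 := volume.restrict (Ioc (0:ℝ) t) with hμ0
  set μ : Measure ℝ := μ0.withDensity (fun s => (f₀ s : ℝ≥0∞)) with hμ
  have hfun : (fun s => f₀ s • g s) = fun s => w s • g s := by
    funext s
    rw [NNReal.smul_def, Real.coe_toNNReal _ (hw0 s)]
  have hwint : IntegrableOn w (Ioc 0 t) := by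
    exact (hw.continuousOn.integrableOn_Icc).mono_set Ioc_subset_Icc_self
  have hμuniv : μ univ = ENNReal.ofReal b := by
    rw [hμ, withDensity_apply _ MeasurableSet.univ, Measure.restrict_univ]
    have h1 : ∫⁻ s, ((f₀ s : ℝ≥0∞)) ∂μ0 = ENNReal.ofReal (∫ s, w s ∂μ0) := by
      rw [ofReal_integral_eq_lintegral_ofReal hwint
        (Filter.Eventually.of_forall fun s => hw0 s)]
      rfl
    rw [h1, hμ0]
    congr 1
    rw [← intervalIntegral.integral_of_le ht.le, hbval]
  have hbne : ENNReal.ofReal b ≠ 0 := by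
    simp [ENNReal.ofReal_eq_zero, not_le, hb]
  set ν : Measure ℝ := (ENNReal.ofReal b)⁻¹ • μ with hν
  haveI : IsProbabilityMeasure ν := by
    constructor
    rw [hν, Measure.smul_apply, hμuniv, smul_eq_mul,
      ENNReal.inv_mul_cancel hbne ENNReal.ofReal_ne_top]
  have haemem : ∀ᵐ s ∂ν, g s ∈ C := by
    apply Measure.ae_smul_measure (μ := μ)
    rw [hμ, ae_withDensity_iff hf₀meas.coe_nnreal_ennreal]
    filter_upwards [ae_restrict_mem measurableSet_Ioc] with s hs _
    exact hgmem s (Ioc_subset_Icc_self hs)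
  have hsmulint : IntegrableOn (fun s => w s • g s) (Ioc 0 t) :=
    ((hw.continuousOn.smul hg).integrableOn_Icc).mono_set Ioc_subset_Icc_self
  have hint_mu : Integrable g μ := by
    rw [hμ, integrable_withDensity_iff_integrable_smul hf₀meas]
    rw [hfun]
    exact hsmulint
  have hint_ν : Integrable g ν :=
    hint_mu.smul_measure (ENNReal.inv_ne_top.2 hbne)
  have hmem := hCcv.integral_mem hCcl haemem hint_ν
  have hcalc : (∫ s, g s ∂ν) = b⁻¹ • ∫ s in (0:ℝ)..t, w s • g s := by
    rw [hν, MeasureTheory.integral_smul_measure, hμ, integral_withDensity_eq_integral_smul hf₀meas, hfun,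
      ENNReal.toReal_inv, ENNReal.toReal_ofReal hb.le,
      intervalIntegral.integral_of_le ht.le]
  rwa [hcalc] at hmem

theorem hasDerivAt_exp_shift (θ c s : ℝ) :
    HasDerivAt (fun x : ℝ => Real.exp ((x - c)/θ)) (θ⁻¹ * Real.exp ((s - c)/θ)) s := by
  have h1 : HasDerivAt (fun x : ℝ => (x - c)/θ) (1/θ) s := by
    simpa using ((hasDerivAt_id s).sub_const c).div_const θ
  have h2 := h1.exp
  convert h2 using 1
  rw [one_div]
  ring

theorem integral_weight_mass (θ t : ℝ) :
    (∫ s in (0:ℝ)..t, θ⁻¹ * Real.exp ((s - t)/θ)) = 1 - Real.exp (-(t/θ)) := by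
  rw [intervalIntegral.integral_eq_sub_of_hasDerivAt
    (f := fun s => Real.exp ((s - t)/θ))
    (fun s _ => hasDerivAt_exp_shift θ t s)
    (Continuous.intervalIntegrable (by fun_prop) _ _)]
  rw [sub_self, zero_div, Real.exp_zero, zero_sub, neg_div]

theorem integral_weight_rho {θ M : ℝ} (hθ : 0 < θ) (a t : ℝ) :
    (∫ s in (0:ℝ)..t, (θ⁻¹ * Real.exp ((s - t)/θ)) *
        ((a * Real.exp (M*s) - 1) + θ*M*(1 + (a * Real.exp (M*s) - 1))))
      = (a * Real.exp (M*t) - 1) - Real.exp (-(t/θ)) * (a - 1) := by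
  have hφ : ∀ s ∈ uIcc (0:ℝ) t,
      HasDerivAt (fun x => Real.exp ((x - t)/θ) * (a * Real.exp (M*x) - 1))
        ((θ⁻¹ * Real.exp ((s - t)/θ)) *
          ((a * Real.exp (M*s) - 1) + θ*M*(1 + (a * Real.exp (M*s) - 1)))) s := by
    intro s _
    have h1 := hasDerivAt_exp_shift θ t s
    have h2 : HasDerivAt (fun x : ℝ => a * Real.exp (M*x) - 1)
        (a * (Real.exp (M*s) * M)) s := by
      have := (((hasDerivAt_id s).const_mul M).exp.const_mul a).sub_const 1
      simpa using this
    have h3 := h1.fun_mul h2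
    refine h3.congr_deriv ?_
    linear_combination (-(Real.exp ((s - t)/θ) * a * Real.exp (M*s) * M)) * inv_mul_cancel₀ hθ.ne'
  rw [intervalIntegral.integral_eq_sub_of_hasDerivAt hφ
    (Continuous.intervalIntegrable (by fun_prop) _ _)]
  rw [sub_self, zero_div, Real.exp_zero, one_mul, zero_sub, neg_div, mul_zero,
    Real.exp_zero, mul_one]

end BrezisAux

namespace BrezisCtx
open BrezisAux Nat

/-- Bundled data for the Brezis existence theorem (with a fixed ball radius `R`,
invariance step `θ` and Lipschitz constant `L`). -/
structure Ctx (E : Type*) [NormedAddCommGroup E] [NormedSpace ℝ E] where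
  C : Set E
  hCcl : IsClosed C
  hCcv : Convex ℝ C
  T : ℝ
  hT : 0 < T
  A : ℝ → E → E
  M : ℝ
  hM : 0 < M
  c₀ : E
  hc₀ : c₀ ∈ C
  R : ℝ
  hρR : ∀ t ∈ Icc (0:ℝ) T, (1 + ‖c₀‖) * Real.exp (M*t) - 1 ≤ R
  θ : ℝ
  hθ : 0 < θ
  hinv : ∀ c ∈ C, ‖c‖ ≤ R → ∀ t ∈ Icc (0:ℝ) T, c + θ • A t c ∈ C
  L : ℝ
  hL : 0 ≤ L
  hlip : ∀ t ∈ Icc (0:ℝ) T, ∀ c₁ ∈ C, ‖c₁‖ ≤ R → ∀ c₂ ∈ C, ‖c₂‖ ≤ R →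
    ‖A t c₁ - A t c₂‖ ≤ L * ‖c₁ - c₂‖
  hcont : ∀ c ∈ C, ContinuousOn (fun t => A t c) (Icc (0:ℝ) T)
  hgrowth : ∀ t ∈ Icc (0:ℝ) T, ∀ c ∈ C, ‖A t c‖ ≤ M * (1 + ‖c‖)

namespace Ctx

variable {E : Type*} [NormedAddCommGroup E] [NormedSpace ℝ E] (P : Ctx E)

/-- The a priori bound curve. -/
noncomputable def ρ (t : ℝ) : ℝ := (1 + ‖P.c₀‖) * Real.exp (P.M * t) - 1

lemma ρ_continuous : Continuous P.ρ := by unfold ρ; fun_prop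

lemma ρ_zero : P.ρ 0 = ‖P.c₀‖ := by simp [ρ]

lemma norm_c₀_le_ρ {t : ℝ} (ht : 0 ≤ t) : ‖P.c₀‖ ≤ P.ρ t := by
  have h1 : (1:ℝ) ≤ Real.exp (P.M * t) := Real.one_le_exp (mul_nonneg P.hM.le ht)
  have h2 : (0:ℝ) ≤ ‖P.c₀‖ := norm_nonneg _
  unfold ρ; nlinarith

lemma ρ_nonneg {t : ℝ} (ht : 0 ≤ t) : 0 ≤ P.ρ t :=
  (norm_nonneg _).trans (P.norm_c₀_le_ρ ht)

lemma ρ_mono {s t : ℝ} (hs : s ≤ t) : P.ρ s ≤ P.ρ t := by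
  have h1 : Real.exp (P.M * s) ≤ Real.exp (P.M * t) :=
    Real.exp_le_exp.2 (mul_le_mul_of_nonneg_left hs P.hM.le)
  have h2 : (0:ℝ) ≤ ‖P.c₀‖ := norm_nonneg _
  unfold ρ; nlinarith

lemma ρ_le_R {t : ℝ} (ht : t ∈ Icc (0:ℝ) P.T) : P.ρ t ≤ P.R := P.hρR t ht

/-- `0` as an element of the time interval. -/
def t0 : Icc (0:ℝ) P.T := ⟨0, left_mem_Icc.2 P.hT.le⟩

/-- The complete metric space of candidate curves. -/
def Sol : Set C(Icc (0:ℝ) P.T, E) :=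
  {u | (∀ x, u x ∈ P.C) ∧ (∀ x : Icc (0:ℝ) P.T, ‖u x‖ ≤ P.ρ x) ∧ u P.t0 = P.c₀}

noncomputable def ext (u : C(Icc (0:ℝ) P.T, E)) : ℝ → E :=
  fun s => u (projIcc 0 P.T P.hT.le s)

lemma ext_continuous (u : C(Icc (0:ℝ) P.T, E)) : Continuous (P.ext u) :=
  u.continuous.comp continuous_projIcc

lemma ext_eq (u : C(Icc (0:ℝ) P.T, E)) {s : ℝ} (hs : s ∈ Icc (0:ℝ) P.T) :
    P.ext u s = u ⟨s, hs⟩ := by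
  unfold ext; rw [projIcc_of_mem]

lemma ext_mem {u : C(Icc (0:ℝ) P.T, E)} (hu : u ∈ P.Sol) {s : ℝ}
    (hs : s ∈ Icc (0:ℝ) P.T) : P.ext u s ∈ P.C := by
  rw [P.ext_eq u hs]; exact hu.1 _

lemma ext_norm {u : C(Icc (0:ℝ) P.T, E)} (hu : u ∈ P.Sol) {s : ℝ}
    (hs : s ∈ Icc (0:ℝ) P.T) : ‖P.ext u s‖ ≤ P.ρ s := by
  rw [P.ext_eq u hs]; exact hu.2.1 _

lemma ext_norm_R {u : C(Icc (0:ℝ) P.T, E)} (hu : u ∈ P.Sol) {s : ℝ}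
    (hs : s ∈ Icc (0:ℝ) P.T) : ‖P.ext u s‖ ≤ P.R :=
  (P.ext_norm hu hs).trans (P.ρ_le_R hs)

/-- The transported vector field along a curve. -/
noncomputable def G (u : C(Icc (0:ℝ) P.T, E)) : ℝ → E :=
  fun s => P.ext u s + P.θ • P.A s (P.ext u s)

lemma contOn_A_ext {u : C(Icc (0:ℝ) P.T, E)} (hu : u ∈ P.Sol) :
    ContinuousOn (fun s => P.A s (P.ext u s)) (Icc (0:ℝ) P.T) :=
  contOn_comp P.hlip P.hcont (P.ext_continuous u).continuousOn
    (fun s hs => P.ext_mem hu hs) (fun s hs => P.ext_norm_R hu hs)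

lemma G_contOn {u : C(Icc (0:ℝ) P.T, E)} (hu : u ∈ P.Sol) :
    ContinuousOn (P.G u) (Icc (0:ℝ) P.T) :=
  ((P.ext_continuous u).continuousOn).add ((P.contOn_A_ext hu).const_smul P.θ)

lemma G_mem {u : C(Icc (0:ℝ) P.T, E)} (hu : u ∈ P.Sol) {s : ℝ}
    (hs : s ∈ Icc (0:ℝ) P.T) : P.G u s ∈ P.C :=
  P.hinv _ (P.ext_mem hu hs) (P.ext_norm_R hu hs) s hs

lemma G_norm {u : C(Icc (0:ℝ) P.T, E)} (hu : u ∈ P.Sol) {s : ℝ}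
    (hs : s ∈ Icc (0:ℝ) P.T) :
    ‖P.G u s‖ ≤ P.ρ s + P.θ * P.M * (1 + P.ρ s) := by
  have h1 := P.hgrowth s hs _ (P.ext_mem hu hs)
  have h2 := P.ext_norm hu hs
  have h3 : ‖P.G u s‖ ≤ ‖P.ext u s‖ + P.θ * ‖P.A s (P.ext u s)‖ := by
    refine (norm_add_le _ _).trans ?_
    rw [norm_smul, Real.norm_eq_abs, abs_of_pos P.hθ]
  have h4 : ‖P.A s (P.ext u s)‖ ≤ P.M * (1 + P.ρ s) :=
    h1.trans (mul_le_mul_of_nonneg_left (by linarith) P.hM.le)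
  nlinarith [P.hθ.le, norm_nonneg (P.A s (P.ext u s))]

/-- The integrand of the Picard-type operator. -/
noncomputable def gI (u : C(Icc (0:ℝ) P.T, E)) : ℝ → E :=
  fun s => (P.θ⁻¹ * Real.exp (s / P.θ)) • P.G u s

lemma gI_contOn {u : C(Icc (0:ℝ) P.T, E)} (hu : u ∈ P.Sol) :
    ContinuousOn (P.gI u) (Icc (0:ℝ) P.T) :=
  (Continuous.continuousOn (by fun_prop)).smul (P.G_contOn hu)

lemma sub_Icc {t : ℝ} (ht : t ∈ Icc (0:ℝ) P.T) :
    uIcc (0:ℝ) t ⊆ Icc (0:ℝ) P.T := by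
  rw [uIcc_of_le ht.1]; exact Icc_subset_Icc le_rfl ht.2

lemma gI_integrable {u : C(Icc (0:ℝ) P.T, E)} (hu : u ∈ P.Sol) {t : ℝ}
    (ht : t ∈ Icc (0:ℝ) P.T) : IntervalIntegrable (P.gI u) volume 0 t :=
  ((P.gI_contOn hu).mono (P.sub_Icc ht)).intervalIntegrable

noncomputable def prim (u : C(Icc (0:ℝ) P.T, E)) : ℝ → E :=
  fun t => ∫ s in (0:ℝ)..t, P.gI u s

lemma prim_hasDeriv [CompleteSpace E] {u : C(Icc (0:ℝ) P.T, E)} (hu : u ∈ P.Sol) {t : ℝ}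
    (ht : t ∈ Icc (0:ℝ) P.T) :
    HasDerivWithinAt (P.prim u) (P.gI u t) (Icc (0:ℝ) P.T) t := by
  haveI : Fact (t ∈ Icc (0:ℝ) P.T) := ⟨ht⟩
  exact intervalIntegral.integral_hasDerivWithinAt_right (P.gI_integrable hu ht)
    ((P.gI_contOn hu).stronglyMeasurableAtFilter_nhdsWithin measurableSet_Icc t)
    ((P.gI_contOn hu) t ht)

/-- The Picard-type operator (as a bare function). -/
noncomputable def nxt (u : C(Icc (0:ℝ) P.T, E)) : ℝ → E :=
  fun t => Real.exp (-(t / P.θ)) • (P.c₀ + P.prim u t)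

lemma nxt_zero (u : C(Icc (0:ℝ) P.T, E)) : P.nxt u 0 = P.c₀ := by
  unfold nxt prim
  rw [intervalIntegral.integral_same]
  norm_num

lemma nxt_hasDeriv [CompleteSpace E] {u : C(Icc (0:ℝ) P.T, E)} (hu : u ∈ P.Sol) {t : ℝ}
    (ht : t ∈ Icc (0:ℝ) P.T) :
    HasDerivWithinAt (P.nxt u) (P.θ⁻¹ • P.G u t - P.θ⁻¹ • P.nxt u t)
      (Icc (0:ℝ) P.T) t := by
  have h1 : HasDerivWithinAt (fun τ => P.c₀ + P.prim u τ) (P.gI u t)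
      (Icc (0:ℝ) P.T) t := (P.prim_hasDeriv hu ht).const_add _
  have h2 : HasDerivAt (fun τ : ℝ => Real.exp (-(τ / P.θ)))
      (-P.θ⁻¹ * Real.exp (-(t / P.θ))) t := by
    have h3 : HasDerivAt (fun τ : ℝ => -(τ / P.θ)) (-P.θ⁻¹) t := by
      simpa [one_div] using ((hasDerivAt_id t).div_const P.θ).fun_neg
    simpa [mul_comm] using h3.exp
  have h4 := (h2.hasDerivWithinAt).fun_smul h1
  convert h4 using 1
  show P.θ⁻¹ • P.G u t - P.θ⁻¹ • P.nxt u t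
      = Real.exp (-(t / P.θ)) • P.gI u t
        + (-P.θ⁻¹ * Real.exp (-(t / P.θ))) • (P.c₀ + P.prim u t)
  unfold nxt gI
  rw [smul_smul, smul_smul]
  have he : Real.exp (-(t / P.θ)) * (P.θ⁻¹ * Real.exp (t / P.θ)) = P.θ⁻¹ := by
    rw [mul_comm P.θ⁻¹, ← mul_assoc, ← Real.exp_add]
    simp
  rw [he]
  module
  rfl

lemma nxt_contOn [CompleteSpace E] {u : C(Icc (0:ℝ) P.T, E)} (hu : u ∈ P.Sol) :
    ContinuousOn (P.nxt u) (Icc (0:ℝ) P.T) :=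
  fun t ht => (P.nxt_hasDeriv hu ht).continuousWithinAt

lemma nxt_eq (u : C(Icc (0:ℝ) P.T, E)) (t : ℝ) :
    P.nxt u t = Real.exp (-(t/P.θ)) • P.c₀ +
      ∫ s in (0:ℝ)..t, (P.θ⁻¹ * Real.exp ((s - t)/P.θ)) • P.G u s := by
  unfold nxt prim gI
  rw [smul_add, ← intervalIntegral.integral_smul]
  congr 1
  apply intervalIntegral.integral_congr
  intro s _
  show Real.exp (-(t/P.θ)) • (P.θ⁻¹ * Real.exp (s/P.θ)) • P.G u s
      = (P.θ⁻¹ * Real.exp ((s - t)/P.θ)) • P.G u s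
  rw [smul_smul]
  congr 1
  rw [show (s-t)/P.θ = -(t/P.θ) + s/P.θ by ring, Real.exp_add]
  ring

lemma nxt_mem [CompleteSpace E] {u : C(Icc (0:ℝ) P.T, E)} (hu : u ∈ P.Sol) {t : ℝ}
    (ht : t ∈ Icc (0:ℝ) P.T) : P.nxt u t ∈ P.C := by
  rcases eq_or_lt_of_le ht.1 with h0 | h0
  · rw [← h0, P.nxt_zero u]; exact P.hc₀
  · rw [P.nxt_eq]
    have hb : 0 < 1 - Real.exp (-(t/P.θ)) := by
      have h1 : Real.exp (-(t/P.θ)) < 1 := by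
        rw [← Real.exp_zero]
        apply Real.exp_lt_exp.2
        have : 0 < t/P.θ := div_pos h0 P.hθ
        linarith
      linarith
    have hmass := BrezisAux.integral_weight_mass P.θ t
    have havg := convex_integral_mem P.hCcl P.hCcv h0
      (w := fun s => P.θ⁻¹ * Real.exp ((s - t)/P.θ)) (by fun_prop)
      (fun s => mul_nonneg (inv_nonneg.2 P.hθ.le) (Real.exp_nonneg _))
      ((P.G_contOn hu).mono (Icc_subset_Icc le_rfl ht.2))
      (fun s hs => P.G_mem hu ⟨hs.1, hs.2.trans ht.2⟩) hb hmass
    have hrw : (∫ s in (0:ℝ)..t, (P.θ⁻¹ * Real.exp ((s - t)/P.θ)) • P.G u s)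
        = (1 - Real.exp (-(t/P.θ))) • ((1 - Real.exp (-(t/P.θ)))⁻¹ •
            ∫ s in (0:ℝ)..t, (P.θ⁻¹ * Real.exp ((s - t)/P.θ)) • P.G u s) := by
      rw [smul_smul, mul_inv_cancel₀ hb.ne', one_smul]
    rw [hrw]
    exact P.hCcv P.hc₀ havg (Real.exp_nonneg _) hb.le (by ring)

lemma nxt_norm [CompleteSpace E] {u : C(Icc (0:ℝ) P.T, E)} (hu : u ∈ P.Sol) {t : ℝ}
    (ht : t ∈ Icc (0:ℝ) P.T) : ‖P.nxt u t‖ ≤ P.ρ t := by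
  rw [P.nxt_eq]
  have hid : (∫ s in (0:ℝ)..t, (P.θ⁻¹ * Real.exp ((s - t)/P.θ)) *
        (P.ρ s + P.θ*P.M*(1 + P.ρ s)))
      = P.ρ t - Real.exp (-(t/P.θ)) * P.ρ 0 := by
    have h := BrezisAux.integral_weight_rho (M := P.M) P.hθ (1 + ‖P.c₀‖) t
    simp only [ρ]
    rw [h]
    simp
  have hnn : 0 ≤ P.ρ t - Real.exp (-(t/P.θ)) * P.ρ 0 := by
    have h1 : Real.exp (-(t/P.θ)) ≤ 1 := by
      apply Real.exp_le_one_iff.2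
      have : 0 ≤ t/P.θ := div_nonneg ht.1 P.hθ.le
      linarith
    have h2 : 0 ≤ P.ρ 0 := P.ρ_nonneg le_rfl
    have h3 : P.ρ 0 ≤ P.ρ t := P.ρ_mono ht.1
    nlinarith
  have hB : ‖∫ s in (0:ℝ)..t, (P.θ⁻¹ * Real.exp ((s - t)/P.θ)) • P.G u s‖
      ≤ P.ρ t - Real.exp (-(t/P.θ)) * P.ρ 0 := by
    have h := intervalIntegral.norm_integral_le_abs_of_norm_le
      (f := fun s => (P.θ⁻¹ * Real.exp ((s - t)/P.θ)) • P.G u s)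
      (g := fun s => (P.θ⁻¹ * Real.exp ((s - t)/P.θ)) * (P.ρ s + P.θ*P.M*(1 + P.ρ s)))
      (μ := volume) (a := 0) (b := t) ?_ ?_
    · rw [hid, abs_of_nonneg hnn] at h
      exact h
    · rw [uIoc_of_le ht.1]
      filter_upwards [ae_restrict_mem measurableSet_Ioc] with s hs
      have hsIcc : s ∈ Icc (0:ℝ) P.T := ⟨hs.1.le, hs.2.trans ht.2⟩
      rw [norm_smul, Real.norm_eq_abs,
        abs_of_nonneg (mul_nonneg (inv_nonneg.2 P.hθ.le) (Real.exp_nonneg _))]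
      exact mul_le_mul_of_nonneg_left (P.G_norm hu hsIcc)
        (mul_nonneg (inv_nonneg.2 P.hθ.le) (Real.exp_nonneg _))
    · have := P.ρ_continuous
      exact Continuous.intervalIntegrable (by fun_prop) _ _
  calc ‖Real.exp (-(t/P.θ)) • P.c₀ +
        ∫ s in (0:ℝ)..t, (P.θ⁻¹ * Real.exp ((s - t)/P.θ)) • P.G u s‖
      ≤ ‖Real.exp (-(t/P.θ)) • P.c₀‖ +
        ‖∫ s in (0:ℝ)..t, (P.θ⁻¹ * Real.exp ((s - t)/P.θ)) • P.G u s‖ := norm_add_le _ _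
    _ ≤ Real.exp (-(t/P.θ)) * ‖P.c₀‖ + (P.ρ t - Real.exp (-(t/P.θ)) * P.ρ 0) := by
        rw [norm_smul, Real.norm_eq_abs, abs_of_nonneg (Real.exp_nonneg _)]
        linarith
    _ = P.ρ t := by rw [P.ρ_zero]; ring

lemma isClosed_Sol : IsClosed P.Sol := by
  have h1 : IsClosed {u : C(Icc (0:ℝ) P.T, E) | ∀ x, u x ∈ P.C} := by
    rw [setOf_forall]
    exact isClosed_iInter fun x => P.hCcl.preimage (continuous_eval_const x)
  have h2 : IsClosed {u : C(Icc (0:ℝ) P.T, E) | ∀ x : Icc (0:ℝ) P.T, ‖u x‖ ≤ P.ρ x} := by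
    rw [setOf_forall]
    exact isClosed_iInter fun x =>
      isClosed_le ((continuous_eval_const x).norm) continuous_const
  have h3 : IsClosed {u : C(Icc (0:ℝ) P.T, E) | u P.t0 = P.c₀} :=
    isClosed_eq (continuous_eval_const _) continuous_const
  have : P.Sol = {u : C(Icc (0:ℝ) P.T, E) | ∀ x, u x ∈ P.C} ∩
      ({u : C(Icc (0:ℝ) P.T, E) | ∀ x : Icc (0:ℝ) P.T, ‖u x‖ ≤ P.ρ x} ∩
        {u : C(Icc (0:ℝ) P.T, E) | u P.t0 = P.c₀}) := rfl
  rw [this]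
  exact h1.inter (h2.inter h3)

lemma const_mem_Sol : (ContinuousMap.const (Icc (0:ℝ) P.T) P.c₀) ∈ P.Sol := by
  refine ⟨fun x => P.hc₀, fun x => ?_, rfl⟩
  simpa using P.norm_c₀_le_ρ x.2.1

/-- The Picard-type operator on the space of candidate curves. -/
noncomputable def next [CompleteSpace E] (u : ↥P.Sol) : ↥P.Sol :=
  ⟨⟨fun x => P.nxt u.1 x.1, ContinuousOn.restrict (P.nxt_contOn u.2)⟩,
    fun x => P.nxt_mem u.2 x.2, fun x => P.nxt_norm u.2 x.2, P.nxt_zero u.1⟩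

/-- The effective Lipschitz constant of the operator. -/
noncomputable def K : ℝ := P.θ⁻¹ * (1 + P.θ * P.L)

lemma K_nonneg : 0 ≤ P.K :=
  mul_nonneg (inv_nonneg.2 P.hθ.le) (by nlinarith [P.hθ.le, P.hL])

lemma dist_apply_le (u v : ↥P.Sol) (x : Icc (0:ℝ) P.T) :
    dist (u.1 x) (v.1 x) ≤ dist u v := by
  rw [Subtype.dist_eq]
  exact ContinuousMap.dist_apply_le_dist x

lemma G_sub_norm {u v : C(Icc (0:ℝ) P.T, E)} (hu : u ∈ P.Sol) (hv : v ∈ P.Sol)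
    {s : ℝ} (hs : s ∈ Icc (0:ℝ) P.T) :
    ‖P.G u s - P.G v s‖ ≤ (1 + P.θ * P.L) * ‖P.ext u s - P.ext v s‖ := by
  have hlip := P.hlip s hs _ (P.ext_mem hu hs) (P.ext_norm_R hu hs)
    _ (P.ext_mem hv hs) (P.ext_norm_R hv hs)
  have hG : P.G u s - P.G v s = (P.ext u s - P.ext v s)
      + P.θ • (P.A s (P.ext u s) - P.A s (P.ext v s)) := by
    unfold G; rw [smul_sub]; abel
  rw [hG]
  refine (norm_add_le _ _).trans ?_
  rw [norm_smul, Real.norm_eq_abs, abs_of_pos P.hθ]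
  nlinarith [P.hθ.le, norm_nonneg (P.ext u s - P.ext v s)]

lemma dist_next_le [CompleteSpace E] (u v : ↥P.Sol) {n : ℕ} {d : ℝ} (hd : 0 ≤ d)
    (h : ∀ x : Icc (0:ℝ) P.T, dist (u.1 x) (v.1 x) ≤ (P.K * x.1)^n / n ! * d)
    (x : Icc (0:ℝ) P.T) :
    dist ((P.next u).1 x) ((P.next v).1 x) ≤ (P.K * x.1)^(n+1) / (n+1)! * d := by
  obtain ⟨t, ht⟩ := x
  have hval : ∀ w : ↥P.Sol, (P.next w).1 ⟨t, ht⟩ = P.nxt w.1 t := fun w => rfl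
  rw [hval, hval, dist_eq_norm]
  have hsub : P.nxt u.1 t - P.nxt v.1 t
      = Real.exp (-(t/P.θ)) • (∫ s in (0:ℝ)..t, (P.gI u.1 s - P.gI v.1 s)) := by
    unfold nxt prim
    rw [intervalIntegral.integral_sub (P.gI_integrable u.2 ht) (P.gI_integrable v.2 ht),
      ← smul_sub]
    congr 1
    abel
  rw [hsub, norm_smul, Real.norm_eq_abs, Real.abs_exp]
  set B : ℝ → ℝ := fun s =>
    (P.θ⁻¹ * Real.exp (s/P.θ)) * ((1 + P.θ*P.L) * ((P.K * s)^n / n ! * d)) with hBdef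
  have hwnn : (0:ℝ) ≤ 1 + P.θ*P.L := by nlinarith [P.hθ.le, P.hL]
  have hptnn : ∀ s : ℝ, 0 ≤ s → 0 ≤ (P.K * s)^n / n ! * d := fun s hs =>
    mul_nonneg (div_nonneg (pow_nonneg (mul_nonneg P.K_nonneg hs) n) (Nat.cast_nonneg _)) hd
  have hptwise : ∀ s ∈ Ioc (0:ℝ) t, ‖P.gI u.1 s - P.gI v.1 s‖ ≤ B s := by
    intro s hs
    have hsIcc : s ∈ Icc (0:ℝ) P.T := ⟨hs.1.le, hs.2.trans ht.2⟩
    have h1 : P.gI u.1 s - P.gI v.1 s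
        = (P.θ⁻¹ * Real.exp (s/P.θ)) • (P.G u.1 s - P.G v.1 s) := by
      unfold gI; rw [smul_sub]
    rw [h1, norm_smul, Real.norm_eq_abs,
      abs_of_nonneg (mul_nonneg (inv_nonneg.2 P.hθ.le) (Real.exp_nonneg _))]
    apply mul_le_mul_of_nonneg_left _ (mul_nonneg (inv_nonneg.2 P.hθ.le) (Real.exp_nonneg _))
    refine (P.G_sub_norm u.2 v.2 hsIcc).trans ?_
    apply mul_le_mul_of_nonneg_left _ hwnn
    have h2 : ‖P.ext u.1 s - P.ext v.1 s‖ = dist (u.1 ⟨s, hsIcc⟩) (v.1 ⟨s, hsIcc⟩) := by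
      rw [dist_eq_norm, P.ext_eq u.1 hsIcc, P.ext_eq v.1 hsIcc]
    rw [h2]; exact h ⟨s, hsIcc⟩
  have hBint : IntervalIntegrable B volume 0 t :=
    Continuous.intervalIntegrable (by fun_prop) _ _
  have hnorm_int : ‖∫ s in (0:ℝ)..t, (P.gI u.1 s - P.gI v.1 s)‖
      ≤ |∫ s in (0:ℝ)..t, B s| := by
    apply intervalIntegral.norm_integral_le_abs_of_norm_le _ hBint
    rw [uIoc_of_le ht.1]
    filter_upwards [ae_restrict_mem measurableSet_Ioc] with s hs
    exact hptwise s hs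
  have hBnonneg : 0 ≤ ∫ s in (0:ℝ)..t, B s := by
    apply intervalIntegral.integral_nonneg ht.1
    intro s hs
    exact mul_nonneg (mul_nonneg (inv_nonneg.2 P.hθ.le) (Real.exp_nonneg _))
      (mul_nonneg hwnn (hptnn s hs.1))
  rw [abs_of_nonneg hBnonneg] at hnorm_int
  calc Real.exp (-(t/P.θ)) * ‖∫ s in (0:ℝ)..t, (P.gI u.1 s - P.gI v.1 s)‖
      ≤ Real.exp (-(t/P.θ)) * ∫ s in (0:ℝ)..t, B s :=
        mul_le_mul_of_nonneg_left hnorm_int (Real.exp_nonneg _)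
    _ = ∫ s in (0:ℝ)..t, Real.exp (-(t/P.θ)) * B s :=
        (intervalIntegral.integral_const_mul _ _).symm
    _ ≤ ∫ s in (0:ℝ)..t, P.K * ((P.K * s)^n / n ! * d) := by
        apply intervalIntegral.integral_mono_on ht.1
          (hBint.const_mul _) (Continuous.intervalIntegrable (by fun_prop) _ _)
        intro s hs
        have he : Real.exp (-(t/P.θ)) * Real.exp (s/P.θ) ≤ 1 := by
          rw [← Real.exp_add]
          apply Real.exp_le_one_iff.2
          rw [show -(t/P.θ) + s/P.θ = (s - t)/P.θ by ring]
          apply div_nonpos_of_nonpos_of_nonneg (by linarith [hs.2]) P.hθ.le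
        have hnn2 : 0 ≤ P.θ⁻¹ * (1 + P.θ*P.L) * ((P.K * s)^n / n ! * d) :=
          mul_nonneg (mul_nonneg (inv_nonneg.2 P.hθ.le) hwnn) (hptnn s hs.1)
        calc Real.exp (-(t/P.θ)) * B s
            = (P.θ⁻¹ * (1 + P.θ*P.L) * ((P.K * s)^n / n ! * d))
              * (Real.exp (-(t/P.θ)) * Real.exp (s/P.θ)) := by rw [hBdef]; ring
          _ ≤ (P.θ⁻¹ * (1 + P.θ*P.L) * ((P.K * s)^n / n ! * d)) * 1 :=
              mul_le_mul_of_nonneg_left he hnn2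
          _ = P.K * ((P.K * s)^n / n ! * d) := by
              rw [mul_one]; simp only [K]; try ring
    _ = (P.K * t)^(n+1) / (n+1)! * d := by
        have hfun : (fun s => P.K * ((P.K * s)^n / n ! * d))
            = fun s => (P.K^(n+1) * d / n !) * s^n := by
          funext s; rw [mul_pow]; ring
        rw [hfun, intervalIntegral.integral_const_mul, integral_pow]
        have hz : (0:ℝ)^(n+1) = 0 := zero_pow (Nat.succ_ne_zero n)
        rw [hz, mul_pow]
        have hfacne : ((n ! : ℝ)) ≠ 0 := Nat.cast_ne_zero.2 (Nat.factorial_ne_zero n)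
        have hn1ne : ((n:ℝ) + 1) ≠ 0 := by positivity
        rw [Nat.factorial_succ]
        push_cast
        field_simp
        ring

lemma dist_iterate_next_apply_le [CompleteSpace E] (u v : ↥P.Sol) (n : ℕ)
    (x : Icc (0:ℝ) P.T) :
    dist ((P.next^[n] u).1 x) ((P.next^[n] v).1 x) ≤ (P.K * x.1)^n / n ! * dist u v := by
  induction n generalizing x with
  | zero => simpa using P.dist_apply_le u v x
  | succ n ih =>
    rw [Function.iterate_succ_apply', Function.iterate_succ_apply']
    exact P.dist_next_le _ _ dist_nonneg ih x

lemma dist_iterate_next_le [CompleteSpace E] (u v : ↥P.Sol) (n : ℕ) :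
    dist (P.next^[n] u) (P.next^[n] v) ≤ (P.K * P.T)^n / n ! * dist u v := by
  have h0 : 0 ≤ (P.K * P.T)^n / n ! * dist u v :=
    mul_nonneg (div_nonneg (pow_nonneg (mul_nonneg P.K_nonneg P.hT.le) n)
      (Nat.cast_nonneg _)) dist_nonneg
  rw [Subtype.dist_eq, ContinuousMap.dist_le h0]
  intro x
  refine (P.dist_iterate_next_apply_le u v n x).trans ?_
  gcongr
  · exact mul_nonneg P.K_nonneg x.2.1
  · exact P.K_nonneg
  · exact x.2.2

theorem exists_solution [CompleteSpace E] :
    ∃ c : ℝ → E, (∀ t ∈ Icc (0:ℝ) P.T, c t ∈ P.C) ∧ c 0 = P.c₀ ∧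
      (∀ t ∈ Icc (0:ℝ) P.T, HasDerivWithinAt c (P.A t (c t)) (Icc (0:ℝ) P.T) t) ∧
      ContinuousOn (fun t => P.A t (c t)) (Icc (0:ℝ) P.T) := by
  haveI : CompleteSpace ↥P.Sol := P.isClosed_Sol.completeSpace_coe
  haveI : Nonempty ↥P.Sol := ⟨⟨_, P.const_mem_Sol⟩⟩
  obtain ⟨N, hN⟩ := ((FloorSemiring.tendsto_pow_div_factorial_atTop (P.K * P.T)).eventually
    (gt_mem_nhds zero_lt_one)).exists
  have hKnn : (0:ℝ) ≤ (P.K * P.T)^N / N ! :=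
    div_nonneg (pow_nonneg (mul_nonneg P.K_nonneg P.hT.le) N) (Nat.cast_nonneg _)
  have hcontr : ContractingWith ⟨_, hKnn⟩ (P.next^[N]) := by
    constructor
    · exact_mod_cast hN
    · exact LipschitzWith.of_dist_le_mul fun u v => P.dist_iterate_next_le u v N
  obtain ⟨u, hu⟩ : ∃ u : ↥P.Sol, P.next u = u := ⟨_, hcontr.isFixedPt_fixedPoint_iterate⟩
  set c : ℝ → E := P.ext u.1 with hc
  have hval : ∀ s, ∀ hs : s ∈ Icc (0:ℝ) P.T, c s = P.nxt u.1 s := by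
    intro s hs
    calc c s = u.1 ⟨s, hs⟩ := P.ext_eq u.1 hs
      _ = (P.next u).1 ⟨s, hs⟩ := by rw [hu]
      _ = P.nxt u.1 s := rfl
  refine ⟨c, ?_, ?_, ?_, ?_⟩
  · intro t ht; rw [hc, P.ext_eq u.1 ht]; exact u.2.1 _
  · have h0 : (0:ℝ) ∈ Icc (0:ℝ) P.T := left_mem_Icc.2 P.hT.le
    rw [hc, P.ext_eq u.1 h0]
    exact u.2.2.2
  · intro t ht
    have hD := P.nxt_hasDeriv u.2 ht
    have hD2 : HasDerivWithinAt c (P.θ⁻¹ • P.G u.1 t - P.θ⁻¹ • P.nxt u.1 t)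
        (Icc (0:ℝ) P.T) t := hD.congr (fun s hs => hval s hs) (hval t ht)
    have heq : P.θ⁻¹ • P.G u.1 t - P.θ⁻¹ • P.nxt u.1 t = P.A t (c t) := by
      rw [← hval t ht]
      show P.θ⁻¹ • (c t + P.θ • P.A t (c t)) - P.θ⁻¹ • c t = P.A t (c t)
      rw [smul_add, smul_smul, inv_mul_cancel₀ P.hθ.ne', one_smul]
      abel
    rwa [heq] at hD2
  · exact contOn_comp P.hlip P.hcont (P.ext_continuous u.1).continuousOn
      (fun s hs => P.ext_mem u.2 hs) (fun s hs => P.ext_norm_R u.2 hs)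

end Ctx
end BrezisCtx

namespace BrezisAux

/-- Uniqueness via Grönwall's inequality. -/
theorem uniqueness {E : Type*} [NormedAddCommGroup E] [NormedSpace ℝ E]
    {C : Set E} {T : ℝ} {A : ℝ → E → E}
    (hlip : ∀ R > (0:ℝ), ∃ LR ≥ (0:ℝ), ∀ t ∈ Icc (0:ℝ) T,
      ∀ c₁ ∈ C, ‖c₁‖ ≤ R → ∀ c₂ ∈ C, ‖c₂‖ ≤ R →
        ‖A t c₁ - A t c₂‖ ≤ LR * ‖c₁ - c₂‖)
    {c₁ c₂ : ℝ → E}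
    (h₁mem : ∀ t ∈ Icc (0:ℝ) T, c₁ t ∈ C) (h₂mem : ∀ t ∈ Icc (0:ℝ) T, c₂ t ∈ C)
    (h₁d : ∀ t ∈ Icc (0:ℝ) T, HasDerivWithinAt c₁ (A t (c₁ t)) (Icc (0:ℝ) T) t)
    (h₂d : ∀ t ∈ Icc (0:ℝ) T, HasDerivWithinAt c₂ (A t (c₂ t)) (Icc (0:ℝ) T) t)
    (hinit : c₁ 0 = c₂ 0) :
    ∀ t ∈ Icc (0:ℝ) T, c₁ t = c₂ t := by
  have hco₁ : ContinuousOn c₁ (Icc (0:ℝ) T) := fun t ht => (h₁d t ht).continuousWithinAt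
  have hco₂ : ContinuousOn c₂ (Icc (0:ℝ) T) := fun t ht => (h₂d t ht).continuousWithinAt
  obtain ⟨R₁, hR₁⟩ := isCompact_Icc.exists_bound_of_continuousOn hco₁
  obtain ⟨R₂, hR₂⟩ := isCompact_Icc.exists_bound_of_continuousOn hco₂
  set R : ℝ := max (max R₁ R₂) 1 with hRdef
  have hR0 : 0 < R := lt_of_lt_of_le one_pos (le_max_right _ _)
  obtain ⟨L, hL0, hlipR⟩ := hlip R hR0
  have hb₁ : ∀ t ∈ Icc (0:ℝ) T, ‖c₁ t‖ ≤ R := fun t ht =>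
    (hR₁ t ht).trans ((le_max_left _ _).trans (le_max_left _ _))
  have hb₂ : ∀ t ∈ Icc (0:ℝ) T, ‖c₂ t‖ ≤ R := fun t ht =>
    (hR₂ t ht).trans ((le_max_right _ _).trans (le_max_left _ _))
  intro t ht
  have key := norm_le_gronwallBound_of_norm_deriv_right_le
    (f := fun s => c₁ s - c₂ s) (f' := fun s => A s (c₁ s) - A s (c₂ s))
    (δ := 0) (K := L) (ε := 0) (a := 0) (b := T)
    (hco₁.sub hco₂) ?_ (by simp [hinit]) ?_ t ht
  · rw [gronwallBound_ε0, zero_mul] at key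
    exact sub_eq_zero.1 (norm_le_zero_iff.1 key)
  · intro s hs
    have hsI : s ∈ Icc (0:ℝ) T := Ico_subset_Icc_self hs
    have hd := (h₁d s hsI).sub (h₂d s hsI)
    apply hd.mono_of_mem_nhdsWithin
    apply Filter.mem_of_superset (inter_mem self_mem_nhdsWithin
      (mem_nhdsWithin_of_mem_nhds (Iio_mem_nhds hs.2)))
    rintro y ⟨hy1, hy2⟩
    exact ⟨hs.1.trans hy1, le_of_lt hy2⟩
  · intro s hs
    have hsI : s ∈ Icc (0:ℝ) T := Ico_subset_Icc_self hs
    have := hlipR s hsI _ (h₁mem s hsI) (hb₁ s hsI) _ (h₂mem s hsI) (hb₂ s hsI)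
    simpa using this

end BrezisAux

open Set

/-- Locally Lipschitz, sublinear-growth version of the Brezis theorem for ODEs
in Banach spaces (Corollary A.2 of the paper): existence and uniqueness of a
C¹ curve in the closed convex set `C` solving `c' = A(t,c)` with prescribed
initial datum. -/
theorem brezis_local_existence_uniqueness
    {E : Type*} [NormedAddCommGroup E] [NormedSpace ℝ E] [CompleteSpace E]
    (C : Set E) (hCne : C.Nonempty) (hCcl : IsClosed C) (hCcv : Convex ℝ C)
    (T : ℝ) (hT : 0 < T) (A : ℝ → E → E)
    (hlip : ∀ R > (0:ℝ), ∃ LR ≥ (0:ℝ), ∀ t ∈ Icc (0:ℝ) T,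
      ∀ c₁ ∈ C, ‖c₁‖ ≤ R → ∀ c₂ ∈ C, ‖c₂‖ ≤ R →
        ‖A t c₁ - A t c₂‖ ≤ LR * ‖c₁ - c₂‖)
    (hcont : ∀ c ∈ C, ContinuousOn (fun t => A t c) (Icc (0:ℝ) T))
    (hinv : ∀ R > (0:ℝ), ∃ θ > (0:ℝ), ∀ c ∈ C, ‖c‖ ≤ R →
      ∀ t ∈ Icc (0:ℝ) T, c + θ • A t c ∈ C)
    (M : ℝ) (hM : 0 < M)
    (hgrowth : ∀ t ∈ Icc (0:ℝ) T, ∀ c ∈ C, ‖A t c‖ ≤ M * (1 + ‖c‖))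
    (c₀ : E) (hc₀ : c₀ ∈ C) :
    (∃ c : ℝ → E,
      (∀ t ∈ Icc (0:ℝ) T, c t ∈ C) ∧ c 0 = c₀ ∧
      (∀ t ∈ Icc (0:ℝ) T, HasDerivWithinAt c (A t (c t)) (Icc (0:ℝ) T) t) ∧
      ContinuousOn (fun t => A t (c t)) (Icc (0:ℝ) T)) ∧
    (∀ c₁ c₂ : ℝ → E,
      ((∀ t ∈ Icc (0:ℝ) T, c₁ t ∈ C) ∧ c₁ 0 = c₀ ∧
        (∀ t ∈ Icc (0:ℝ) T, HasDerivWithinAt c₁ (A t (c₁ t)) (Icc (0:ℝ) T) t) ∧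
        ContinuousOn (fun t => A t (c₁ t)) (Icc (0:ℝ) T)) →
      ((∀ t ∈ Icc (0:ℝ) T, c₂ t ∈ C) ∧ c₂ 0 = c₀ ∧
        (∀ t ∈ Icc (0:ℝ) T, HasDerivWithinAt c₂ (A t (c₂ t)) (Icc (0:ℝ) T) t) ∧
        ContinuousOn (fun t => A t (c₂ t)) (Icc (0:ℝ) T)) →
      ∀ t ∈ Icc (0:ℝ) T, c₁ t = c₂ t) := by
  constructor
  · -- existence
    set R : ℝ := (1 + ‖c₀‖) * Real.exp (M * T) with hRdef
    have hR0 : 0 < R := by positivity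
    obtain ⟨θ, hθ0, hθinv⟩ := hinv R hR0
    obtain ⟨L, hL0, hlipR⟩ := hlip R hR0
    have hρR : ∀ t ∈ Icc (0:ℝ) T, (1 + ‖c₀‖) * Real.exp (M*t) - 1 ≤ R := by
      intro t ht
      have h1 : Real.exp (M*t) ≤ Real.exp (M*T) :=
        Real.exp_le_exp.2 (mul_le_mul_of_nonneg_left ht.2 hM.le)
      have h2 : (0:ℝ) ≤ 1 + ‖c₀‖ := by positivity
      nlinarith
    exact BrezisCtx.Ctx.exists_solution
      { C := C, hCcl := hCcl, hCcv := hCcv, T := T, hT := hT, A := A, M := M, hM := hM,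
        c₀ := c₀, hc₀ := hc₀, R := R, hρR := hρR, θ := θ, hθ := hθ0, hinv := hθinv,
        L := L, hL := hL0, hlip := hlipR, hcont := hcont, hgrowth := hgrowth }
  · -- uniqueness
    rintro c₁ c₂ ⟨h₁mem, h₁init, h₁d, -⟩ ⟨h₂mem, h₂init, h₂d, -⟩
    exact BrezisAux.uniqueness hlip h₁mem h₂mem h₁d h₂d (by rw [h₁init, h₂init])
end
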